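/- arXiv:1705.04318 — 6 statements merged into one kernel-verified Lean document; each statement's English description precedes it below -/
import Mathlib

section
/- Let F_1, ..., F_m be points in the Euclidean plane that are not all collinear. Then the function F(X) = Σ_{i=1}^m d(X, F_i) is strictly convex on ℝ². -/
theorem sum_dist_strictConvex (m : ℕ) (F : Fin m → EuclideanSpace ℝ (Fin 2))
    (h : ¬ Collinear ℝ (Set.range F)) :
    StrictConvexOn ℝ Set.univ (fun X : EuclideanSpace ℝ (Fin 2) => ∑ i, dist X (F i)) := by
  classical
  refine ⟨convex_univ, ?_⟩
  intro x _ y _ hxy a b ha hb hab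
  -- there is some i with ¬ SameRay ℝ (x - F i) (y - F i)
  by_cases H : ∀ i, SameRay ℝ (x - F i) (y - F i)
  · exfalso
    apply h
    rw [collinear_iff_exists_forall_eq_smul_vadd]
    refine ⟨x, y - x, ?_⟩
    rintro p ⟨i, rfl⟩
    obtain ⟨u, c₁, c₂, hc₁, hc₂, hsum, h1, h2⟩ := (H i).exists_eq_smul
    have hyx : y - x = (c₂ - c₁) • u := by
      have : y - x = (y - F i) - (x - F i) := by abel
      rw [this, h1, h2, sub_smul]
    have hne : c₂ - c₁ ≠ 0 := by
      intro h0
      apply hxy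
      have : y - x = 0 := by rw [hyx, h0, zero_smul]
      have := sub_eq_zero.mp this
      exact this.symm ▸ rfl
    refine ⟨-c₁ / (c₂ - c₁), ?_⟩
    have hFi : F i = x - c₁ • u := by
      have : x - F i = c₁ • u := h1
      linear_combination (norm := module) -this
    rw [hFi, hyx]
    rw [smul_smul]
    have : -c₁ / (c₂ - c₁) * (c₂ - c₁) = -c₁ := div_mul_cancel₀ _ hne
    rw [this]
    simp only [vadd_eq_add, neg_smul]
    abel
  · push_neg at H
    obtain ⟨i, hi⟩ := H
    have key : ∀ j, dist (a • x + b • y) (F j) ≤ a * dist x (F j) + b * dist y (F j) := by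
      intro j
      have hz : a • x + b • y - F j = a • (x - F j) + b • (y - F j) := by
        have : (a + b) • F j = F j := by rw [hab, one_smul]
        calc a • x + b • y - F j = a • x + b • y - (a + b) • F j := by rw [this]
        _ = a • (x - F j) + b • (y - F j) := by
          rw [add_smul]; simp only [smul_sub]; abel
      rw [dist_eq_norm, hz]
      calc ‖a • (x - F j) + b • (y - F j)‖ ≤ ‖a • (x - F j)‖ + ‖b • (y - F j)‖ :=
            norm_add_le _ _
        _ = a * dist x (F j) + b * dist y (F j) := by
            rw [norm_smul, norm_smul, Real.norm_eq_abs, Real.norm_eq_abs,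
              abs_of_pos ha, abs_of_pos hb, dist_eq_norm, dist_eq_norm]
    have keyi : dist (a • x + b • y) (F i) < a * dist x (F i) + b * dist y (F i) := by
      have hz : a • x + b • y - F i = a • (x - F i) + b • (y - F i) := by
        have : (a + b) • F i = F i := by rw [hab, one_smul]
        calc a • x + b • y - F i = a • x + b • y - (a + b) • F i := by rw [this]
        _ = a • (x - F i) + b • (y - F i) := by
          rw [add_smul]; simp only [smul_sub]; abel
      rw [dist_eq_norm, hz]
      have hns : ¬ SameRay ℝ (a • (x - F i)) (b • (y - F i)) := by
        intro hS
        apply hi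
        have := (hS.pos_smul_left (inv_pos.mpr ha)).pos_smul_right (inv_pos.mpr hb)
        rwa [smul_smul, smul_smul, inv_mul_cancel₀ ha.ne', inv_mul_cancel₀ hb.ne',
          one_smul, one_smul] at this
      calc ‖a • (x - F i) + b • (y - F i)‖ < ‖a • (x - F i)‖ + ‖b • (y - F i)‖ :=
            norm_add_lt_of_not_sameRay hns
        _ = a * dist x (F i) + b * dist y (F i) := by
            rw [norm_smul, norm_smul, Real.norm_eq_abs, Real.norm_eq_abs,
              abs_of_pos ha, abs_of_pos hb, dist_eq_norm, dist_eq_norm]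
    calc (fun X : EuclideanSpace ℝ (Fin 2) => ∑ j, dist X (F j)) (a • x + b • y)
        = ∑ j, dist (a • x + b • y) (F j) := rfl
      _ < ∑ j, (a * dist x (F j) + b * dist y (F j)) := by
          refine Finset.sum_lt_sum (fun j _ => key j) ⟨i, Finset.mem_univ i, keyi⟩
      _ = a • (∑ j, dist x (F j)) + b • (∑ j, dist y (F j)) := by
          rw [Finset.sum_add_distrib, ← Finset.mul_sum, ← Finset.mul_sum]
          simp [smul_eq_mul]
end

section
/- Let F_1, ..., F_m be points in ℝ² and let X be a point different from all the F_i. Then X is a global minimizer of F(Y) = Σ_{i=1}^m ‖Y - F_i‖ if and only if Σ_{i=1}^m (F_i - X)/‖F_i - X‖ = 0. -/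
set_option maxHeartbeats 1000000
open scoped RealInnerProductSpace

lemma weissfeld_aux_ineq {E : Type*} [NormedAddCommGroup E] [InnerProductSpace ℝ E]
    (a v : E) (ha : a ≠ 0) (t : ℝ) (ht : 0 ≤ t) (ht' : t * ‖v‖ ≤ ‖a‖) :
    ‖a + t • v‖ ≤ ‖a‖ + t * (⟪a, v⟫ / ‖a‖) + t ^ 2 * ‖v‖ ^ 2 / (2 * ‖a‖) := by
  have hna : (0:ℝ) < ‖a‖ := norm_pos_iff.mpr ha
  have h1 : -(‖a‖ * ‖v‖) ≤ ⟪a, v⟫ := neg_le_of_abs_le (abs_real_inner_le_norm a v)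
  have hform : ‖a‖ + t * (⟪a, v⟫ / ‖a‖) + t ^ 2 * ‖v‖ ^ 2 / (2 * ‖a‖)
      = (2 * ‖a‖ ^ 2 + 2 * t * ⟪a, v⟫ + t ^ 2 * ‖v‖ ^ 2) / (2 * ‖a‖) := by
    field_simp
  have hL : ‖a + t • v‖ ^ 2 = ‖a‖ ^ 2 + 2 * t * ⟪a, v⟫ + t ^ 2 * ‖v‖ ^ 2 := by
    rw [norm_add_sq_real, real_inner_smul_right, norm_smul, Real.norm_eq_abs, abs_of_nonneg ht,
      mul_pow]
    ring
  have hNnn : (0:ℝ) ≤ 2 * ‖a‖ ^ 2 + 2 * t * ⟪a, v⟫ + t ^ 2 * ‖v‖ ^ 2 := by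
    nlinarith [sq_nonneg (‖a‖ - t * ‖v‖)]
  rw [hform]
  have hsq : ‖a + t • v‖ ^ 2 ≤ ((2 * ‖a‖ ^ 2 + 2 * t * ⟪a, v⟫ + t ^ 2 * ‖v‖ ^ 2) / (2 * ‖a‖)) ^ 2 := by
    rw [hL, div_pow, le_div_iff₀ (by positivity)]
    nlinarith [sq_nonneg (2 * t * ⟪a, v⟫ + t ^ 2 * ‖v‖ ^ 2)]
  calc ‖a + t • v‖ = Real.sqrt (‖a + t • v‖ ^ 2) := (Real.sqrt_sq (norm_nonneg _)).symm
    _ ≤ Real.sqrt (((2 * ‖a‖ ^ 2 + 2 * t * ⟪a, v⟫ + t ^ 2 * ‖v‖ ^ 2) / (2 * ‖a‖)) ^ 2) :=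
        Real.sqrt_le_sqrt hsq
    _ = (2 * ‖a‖ ^ 2 + 2 * t * ⟪a, v⟫ + t ^ 2 * ‖v‖ ^ 2) / (2 * ‖a‖) :=
        Real.sqrt_sq (div_nonneg hNnn (by positivity))

theorem weissfeld_first (m : ℕ) (F : Fin m → EuclideanSpace ℝ (Fin 2))
    (X : EuclideanSpace ℝ (Fin 2)) (hX : ∀ i, X ≠ F i) :
    IsMinOn (fun Y : EuclideanSpace ℝ (Fin 2) => ∑ i, ‖Y - F i‖) Set.univ X ↔
      ∑ i, (‖F i - X‖⁻¹ : ℝ) • (F i - X) = 0 := by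
  have hr : ∀ i, (0:ℝ) < ‖F i - X‖ :=
    fun i => norm_pos_iff.mpr (sub_ne_zero.mpr (fun h => hX i h.symm))
  set S : EuclideanSpace ℝ (Fin 2) := ∑ i, (‖F i - X‖⁻¹ : ℝ) • (F i - X) with hSdef
  -- the key algebraic identity: ∑ ⟪X - F i, w⟫ / ‖X - F i‖ = ⟪-S, w⟫
  have hkey : ∀ w : EuclideanSpace ℝ (Fin 2),
      ∑ i, ⟪X - F i, w⟫ / ‖X - F i‖ = -⟪S, w⟫ := by
    intro w
    rw [hSdef, sum_inner, ← Finset.sum_neg_distrib]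
    refine Finset.sum_congr rfl fun i _ => ?_
    rw [real_inner_smul_left, ← neg_sub X (F i), inner_neg_left, norm_neg, norm_sub_rev]
    field_simp
  constructor
  · -- minimizer ⇒ gradient condition
    intro hmin
    by_contra hS0
    have hnS : (0:ℝ) < ‖S‖ := norm_pos_iff.mpr hS0
    have hm : (Finset.univ : Finset (Fin m)).Nonempty := by
      by_contra hempty
      rw [Finset.not_nonempty_iff_eq_empty] at hempty
      exact hS0 (by rw [hSdef, hempty, Finset.sum_empty])
    set C : ℝ := ∑ i, ‖S‖ ^ 2 / (2 * ‖F i - X‖) with hCdef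
    have hC : 0 ≤ C := Finset.sum_nonneg fun i _ => by positivity
    set rmin : ℝ := Finset.univ.inf' hm (fun i => ‖F i - X‖) with hrm
    have hrmin : 0 < rmin := by
      rw [hrm, Finset.lt_inf'_iff]
      exact fun i _ => hr i
    set t : ℝ := min (‖S‖ ^ 2 / (2 * (C + 1))) (rmin / ‖S‖) with htdef
    have h2C : (0:ℝ) < 2 * (C + 1) := by linarith
    have ht : 0 < t := lt_min (div_pos (pow_pos hnS 2) h2C) (div_pos hrmin hnS)
    have htS : ∀ i, t * ‖S‖ ≤ ‖X - F i‖ := by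
      intro i
      rw [norm_sub_rev]
      calc t * ‖S‖ ≤ (rmin / ‖S‖) * ‖S‖ :=
            mul_le_mul_of_nonneg_right (min_le_right _ _) (norm_nonneg _)
        _ = rmin := by field_simp
        _ ≤ ‖F i - X‖ := Finset.inf'_le _ (Finset.mem_univ i)
    have hsum : ∑ i, ‖X + t • S - F i‖ ≤ (∑ i, ‖X - F i‖) - t * ‖S‖ ^ 2 + t ^ 2 * C := by
      have hterm : ∀ i ∈ Finset.univ,
          ‖X + t • S - F i‖ ≤ ‖X - F i‖ + t * (⟪X - F i, S⟫ / ‖X - F i‖)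
            + t ^ 2 * ‖S‖ ^ 2 / (2 * ‖X - F i‖) := by
        intro i _
        have : X + t • S - F i = (X - F i) + t • S := by abel
        rw [this]
        exact weissfeld_aux_ineq (X - F i) S
          (sub_ne_zero.mpr (hX i)) t ht.le (htS i)
      have hS2 : ∑ i, ⟪X - F i, S⟫ / ‖X - F i‖ = -‖S‖ ^ 2 := by
        rw [hkey S, real_inner_self_eq_norm_sq]
      have hC' : ∑ i, ‖S‖ ^ 2 / (2 * ‖X - F i‖) = C := by
        rw [hCdef]
        refine Finset.sum_congr rfl fun i _ => ?_
        rw [norm_sub_rev]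
      have h3 : ∑ i, t ^ 2 * ‖S‖ ^ 2 / (2 * ‖X - F i‖)
          = t ^ 2 * ∑ i, ‖S‖ ^ 2 / (2 * ‖X - F i‖) := by
        rw [Finset.mul_sum]
        refine Finset.sum_congr rfl fun i _ => ?_
        ring
      calc ∑ i, ‖X + t • S - F i‖
          ≤ ∑ i, (‖X - F i‖ + t * (⟪X - F i, S⟫ / ‖X - F i‖)
              + t ^ 2 * ‖S‖ ^ 2 / (2 * ‖X - F i‖)) := Finset.sum_le_sum hterm
        _ = (∑ i, ‖X - F i‖) + t * (∑ i, ⟪X - F i, S⟫ / ‖X - F i‖)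
              + t ^ 2 * (∑ i, ‖S‖ ^ 2 / (2 * ‖X - F i‖)) := by
            rw [Finset.sum_add_distrib, Finset.sum_add_distrib, ← Finset.mul_sum, h3]
        _ = (∑ i, ‖X - F i‖) + t * (-‖S‖ ^ 2) + t ^ 2 * C := by rw [hS2, hC']
        _ = (∑ i, ‖X - F i‖) - t * ‖S‖ ^ 2 + t ^ 2 * C := by ring
    have hge : ∑ i, ‖X - F i‖ ≤ ∑ i, ‖X + t • S - F i‖ :=
      hmin (Set.mem_univ (X + t • S))
    have hfinal : t * ‖S‖ ^ 2 ≤ t ^ 2 * C := by linarith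
    have ht1 : t ≤ ‖S‖ ^ 2 / (2 * (C + 1)) := min_le_left _ _
    have ht1' : t * (2 * (C + 1)) ≤ ‖S‖ ^ 2 := (le_div_iff₀ h2C).mp ht1
    nlinarith [mul_pos ht ht, mul_pos ht hnS, sq_nonneg ‖S‖,
      mul_le_mul_of_nonneg_left ht1' (mul_nonneg ht.le hC)]
  · -- gradient condition ⇒ minimizer
    intro h0 Y _
    simp only
    have hterm : ∀ i ∈ Finset.univ,
        ‖X - F i‖ + ⟪(‖F i - X‖⁻¹ : ℝ) • (F i - X), X - Y⟫ ≤ ‖Y - F i‖ := by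
      intro i _
      have hri := hr i
      have h1 : ⟪X - F i, Y - F i⟫ ≤ ‖X - F i‖ * ‖Y - F i‖ := real_inner_le_norm _ _
      rw [norm_sub_rev X (F i)] at h1
      have hexp : ⟪X - F i, Y - F i⟫ = ⟪X - F i, Y - X⟫ + ‖F i - X‖ ^ 2 := by
        have hYF : Y - F i = (Y - X) + (X - F i) := by abel
        rw [hYF, inner_add_right, real_inner_self_eq_norm_sq, norm_sub_rev X (F i)]
      rw [hexp] at h1
      have hinner : ⟪(‖F i - X‖⁻¹ : ℝ) • (F i - X), X - Y⟫
          = ‖F i - X‖⁻¹ * ⟪X - F i, Y - X⟫ := by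
        rw [real_inner_smul_left, ← neg_sub X (F i), ← neg_sub Y X, inner_neg_left,
          inner_neg_right]
        ring_nf
      rw [hinner, norm_sub_rev X (F i)]
      have h2 : (⟪X - F i, Y - X⟫ + ‖F i - X‖ ^ 2) / ‖F i - X‖ ≤ ‖Y - F i‖ := by
        rw [div_le_iff₀ hri]
        linarith
      calc ‖F i - X‖ + ‖F i - X‖⁻¹ * ⟪X - F i, Y - X⟫
          = (⟪X - F i, Y - X⟫ + ‖F i - X‖ ^ 2) / ‖F i - X‖ := by
            field_simp
            ring
        _ ≤ ‖Y - F i‖ := h2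
    have := Finset.sum_le_sum hterm
    rw [Finset.sum_add_distrib, ← sum_inner, ← hSdef, h0] at this
    simpa using this
end

section
/- Let F_1, ..., F_m be points in ℝ², let F_i be one of them with multiplicity k_i (i.e., k_i of the points F_1, ..., F_m equal F_i). Then F_i is a global minimizer of F(Y) = Σ_{j=1}^m ‖Y - F_j‖ if and only if ‖ Σ_{F_j ≠ F_i} (F_j - F_i)/‖F_j - F_i‖ ‖ ≤ k_i. -/
open scoped Classical
open RealInnerProductSpace

set_option maxHeartbeats 1000000 in
theorem weissfeld_second (m : ℕ) (F : Fin m → EuclideanSpace ℝ (Fin 2)) (i₀ : Fin m)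
    (k : ℕ) (hk : k = (Finset.univ.filter (fun j => F j = F i₀)).card) :
    IsMinOn (fun Y : EuclideanSpace ℝ (Fin 2) => ∑ j, ‖Y - F j‖) Set.univ (F i₀) ↔
      ‖∑ j ∈ Finset.univ.filter (fun j => F j ≠ F i₀),
        (‖F j - F i₀‖⁻¹ : ℝ) • (F j - F i₀)‖ ≤ (k : ℝ) := by
  classical
  set S := Finset.univ.filter (fun j : Fin m => F j ≠ F i₀) with hSdef
  set T := Finset.univ.filter (fun j : Fin m => F j = F i₀) with hTdef
  set R := ∑ j ∈ S, (‖F j - F i₀‖⁻¹ : ℝ) • (F j - F i₀) with hRdef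
  have hsplit : ∀ g : Fin m → ℝ, (∑ j, g j) = (∑ j ∈ T, g j) + ∑ j ∈ S, g j := by
    intro g
    rw [hTdef, hSdef]
    exact (Finset.sum_filter_add_sum_filter_not Finset.univ _ g).symm
  have hSmem : ∀ j ∈ S, F j ≠ F i₀ := by
    intro j hj; simpa [hSdef] using hj
  have hTmem : ∀ j ∈ T, F j = F i₀ := by
    intro j hj; simpa [hTdef] using hj
  have hvpos : ∀ j ∈ S, (0:ℝ) < ‖F j - F i₀‖ := fun j hj =>
    norm_pos_iff.mpr (sub_ne_zero.mpr (hSmem j hj))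
  -- value at the candidate point
  have hF0 : (∑ j, ‖F i₀ - F j‖) = ∑ j ∈ S, ‖F j - F i₀‖ := by
    rw [hsplit]
    have h1 : (∑ j ∈ T, ‖F i₀ - F j‖) = 0 :=
      Finset.sum_eq_zero fun j hj => by simp [hTmem j hj]
    rw [h1, zero_add]
    exact Finset.sum_congr rfl fun j _ => norm_sub_rev _ _
  constructor
  · -- minimizer ⇒ ‖R‖ ≤ k
    intro hmin
    by_contra hcon
    push_neg at hcon
    have hRpos : (0:ℝ) < ‖R‖ := lt_of_le_of_lt (Nat.cast_nonneg k) hcon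
    have hSne : S.Nonempty := by
      by_contra hne
      rw [Finset.not_nonempty_iff_eq_empty] at hne
      rw [hRdef, hne, Finset.sum_empty, norm_zero] at hRpos
      exact lt_irrefl _ hRpos
    set C := ∑ j ∈ S, (2 * ‖F j - F i₀‖)⁻¹ with hCdef
    have hCpos : 0 < C := Finset.sum_pos (fun j hj => by have := hvpos j hj; positivity) hSne
    set d := (‖R‖⁻¹ : ℝ) • R with hddef
    have hd1 : ‖d‖ = 1 := by
      rw [hddef, norm_smul, norm_inv, norm_norm, inv_mul_cancel₀ (ne_of_gt hRpos)]
    set t := (‖R‖ - k) / (2 * C) with htdef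
    have htpos : 0 < t := by
      apply div_pos (by linarith) (by linarith)
    set Y := F i₀ + t • d with hYdef
    -- per-term bound on S
    have hterm : ∀ j ∈ S, ‖Y - F j‖ ≤ ‖F j - F i₀‖
        - t * ⟪(‖F j - F i₀‖⁻¹ : ℝ) • (F j - F i₀), d⟫ + t^2 * (2 * ‖F j - F i₀‖)⁻¹ := by
      intro j hj
      have hv := hvpos j hj
      have hYj : Y - F j = t • d - (F j - F i₀) := by
        rw [hYdef]; abel
      rw [hYj]
      set v := F j - F i₀ with hvdef
      have hsq : ‖t • d - v‖ ^ 2 = ‖t • d‖ ^ 2 - 2 * ⟪t • d, v⟫ + ‖v‖ ^ 2 :=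
        norm_sub_sq_real _ _
      have htd : ‖t • d‖ = t := by
        rw [norm_smul, hd1, mul_one, Real.norm_eq_abs, abs_of_pos htpos]
      have hip : ⟪t • d, v⟫ = t * ⟪d, v⟫ := real_inner_smul_left _ _ _
      have hip2 : ⟪(‖v‖⁻¹ : ℝ) • v, d⟫ = ‖v‖⁻¹ * ⟪v, d⟫ := real_inner_smul_left _ _ _
      have hcomm : ⟪d, v⟫ = ⟪v, d⟫ := real_inner_comm _ _
      rw [htd, hip, hcomm] at hsq
      rw [hip2]
      have hx : (0:ℝ) ≤ ‖t • d - v‖ := norm_nonneg _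
      have key : 2 * ‖v‖ * ‖t • d - v‖ ≤ 2 * ‖v‖^2 - 2 * (t * ⟪v, d⟫) + t^2 := by
        nlinarith [sq_nonneg (‖v‖ - ‖t • d - v‖)]
      have h2 : ‖t • d - v‖ ≤ (2 * ‖v‖^2 - 2 * (t * ⟪v, d⟫) + t^2) / (2 * ‖v‖) := by
        rw [le_div_iff₀ (by linarith)]
        linarith [key]
      calc ‖t • d - v‖ ≤ (2 * ‖v‖^2 - 2 * (t * ⟪v, d⟫) + t^2) / (2 * ‖v‖) := h2
        _ = ‖v‖ - t * (‖v‖⁻¹ * ⟪v, d⟫) + t^2 * (2 * ‖v‖)⁻¹ := by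
            field_simp
    -- sum over S
    have hsumS : (∑ j ∈ S, ‖Y - F j‖) ≤ (∑ j ∈ S, ‖F j - F i₀‖) - t * ‖R‖ + t^2 * C := by
      have h1 : (∑ j ∈ S, ‖Y - F j‖) ≤ ∑ j ∈ S, (‖F j - F i₀‖
          - t * ⟪(‖F j - F i₀‖⁻¹ : ℝ) • (F j - F i₀), d⟫ + t^2 * (2 * ‖F j - F i₀‖)⁻¹) :=
        Finset.sum_le_sum hterm
      have h2 : ⟪R, d⟫ = ∑ j ∈ S, ⟪(‖F j - F i₀‖⁻¹ : ℝ) • (F j - F i₀), d⟫ := by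
        rw [hRdef]; exact sum_inner _ _ _
      have h3 : ⟪R, d⟫ = ‖R‖ := by
        rw [hddef, real_inner_smul_right, real_inner_self_eq_norm_sq]
        field_simp
      calc (∑ j ∈ S, ‖Y - F j‖) ≤ _ := h1
        _ = (∑ j ∈ S, ‖F j - F i₀‖) - t * ⟪R, d⟫ + t^2 * C := by
            rw [h2, hCdef, Finset.sum_add_distrib, Finset.sum_sub_distrib,
              Finset.mul_sum, Finset.mul_sum]
        _ = (∑ j ∈ S, ‖F j - F i₀‖) - t * ‖R‖ + t^2 * C := by rw [h3]
    -- sum over T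
    have hsumT : (∑ j ∈ T, ‖Y - F j‖) = k * t := by
      have : ∀ j ∈ T, ‖Y - F j‖ = t := by
        intro j hj
        rw [hYdef, hTmem j hj]
        simp only [add_sub_cancel_left]
        rw [norm_smul, hd1, mul_one, Real.norm_eq_abs, abs_of_pos htpos]
      rw [Finset.sum_congr rfl this, Finset.sum_const, nsmul_eq_mul, hk, hTdef]
    have htC : t * C = (‖R‖ - k) / 2 := by
      rw [htdef]; field_simp
    have hlt : (∑ j, ‖Y - F j‖) < ∑ j, ‖F i₀ - F j‖ := by
      rw [hsplit (fun j => ‖Y - F j‖), hF0, hsumT]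
      have : t^2 * C = t * (t * C) := by ring
      nlinarith [hsumS, htpos]
    have := isMinOn_iff.mp hmin Y (Set.mem_univ Y)
    linarith [hlt, this]
  · -- ‖R‖ ≤ k ⇒ minimizer
    intro hle
    rw [isMinOn_iff]
    intro Y _
    show (∑ j, ‖F i₀ - F j‖) ≤ ∑ j, ‖Y - F j‖
    rw [hF0, hsplit (fun j => ‖Y - F j‖)]
    have hsumT : (∑ j ∈ T, ‖Y - F j‖) = k * ‖Y - F i₀‖ := by
      have : ∀ j ∈ T, ‖Y - F j‖ = ‖Y - F i₀‖ := fun j hj => by rw [hTmem j hj]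
      rw [Finset.sum_congr rfl this, Finset.sum_const, nsmul_eq_mul, hk, hTdef]
    have hterm : ∀ j ∈ S, ‖F j - F i₀‖
        + ⟪(‖F j - F i₀‖⁻¹ : ℝ) • (F j - F i₀), F i₀ - Y⟫ ≤ ‖Y - F j‖ := by
      intro j hj
      have hv := hvpos j hj
      set v := F j - F i₀ with hvdef
      set u := (‖v‖⁻¹ : ℝ) • v with hudef
      have hu1 : ‖u‖ = 1 := by
        rw [hudef, norm_smul, norm_inv, norm_norm, inv_mul_cancel₀ (ne_of_gt hv)]
      have hsplit2 : F j - Y = v + (F i₀ - Y) := by rw [hvdef]; abel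
      have h1 : ⟪u, F j - Y⟫ = ⟪u, v⟫ + ⟪u, F i₀ - Y⟫ := by
        rw [hsplit2, inner_add_right]
      have h2 : ⟪u, v⟫ = ‖v‖ := by
        rw [hudef, real_inner_smul_left, real_inner_self_eq_norm_sq]
        field_simp
      have h3 : ⟪u, F j - Y⟫ ≤ ‖F j - Y‖ := by
        calc ⟪u, F j - Y⟫ ≤ ‖u‖ * ‖F j - Y‖ := real_inner_le_norm _ _
          _ = ‖F j - Y‖ := by rw [hu1, one_mul]
      rw [norm_sub_rev Y (F j)]
      rw [h1, h2] at h3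
      linarith
    have hsumS : (∑ j ∈ S, ‖F j - F i₀‖) + ⟪R, F i₀ - Y⟫ ≤ ∑ j ∈ S, ‖Y - F j‖ := by
      have h1 : ⟪R, F i₀ - Y⟫ = ∑ j ∈ S, ⟪(‖F j - F i₀‖⁻¹ : ℝ) • (F j - F i₀), F i₀ - Y⟫ := by
        rw [hRdef]; exact sum_inner _ _ _
      rw [h1, ← Finset.sum_add_distrib]
      exact Finset.sum_le_sum hterm
    have hip : -(‖R‖ * ‖F i₀ - Y‖) ≤ ⟪R, F i₀ - Y⟫ :=
      neg_le_of_abs_le (abs_real_inner_le_norm _ _)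
    have hrev : ‖F i₀ - Y‖ = ‖Y - F i₀‖ := norm_sub_rev _ _
    have hnn : (0:ℝ) ≤ ‖Y - F i₀‖ := norm_nonneg _
    rw [hsumT]
    nlinarith [hsumS, hip, hle, hnn, hrev]
end

section
/- Let F_1, ..., F_m be points in ℝ², F_i one of them with multiplicity k_i, and F(Y) = Σ_{j=1}^m ‖Y - F_j‖. Then for every direction v ∈ ℝ², the one-sided directional derivative of F at F_i in direction v equals k_i‖v‖ + ⟨v, N_i⟩, where N_i = - Σ_{F_j ≠ F_i} (F_j - F_i)/‖F_j - F_i‖. -/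
/-!
Each summand `‖Y - F j‖` has a one-sided directional derivative at `F i₀`: away from its
kink it is differentiable with gradient the unit vector `(F i₀ - F j) / ‖F i₀ - F j‖`, and at
its kink (`F j = F i₀`) it is positively homogeneous along the ray, with slope `‖v‖`. Summing
gives `k ‖v‖` from the `k` copies of `F i₀` and `⟪v, N⟫` from the others.
-/

open scoped Classical

open Filter Topology

section NormDirectionalDerivative

variable {E : Type*} [NormedAddCommGroup E] [InnerProductSpace ℝ E]

theorem hasDerivAt_norm_add_smul {x : E} (hx : x ≠ 0) (v : E) :
    HasDerivAt (fun t : ℝ => ‖x + t • v‖) (inner ℝ v (‖x‖⁻¹ • x)) 0 := by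
  have hline : HasDerivAt (fun t : ℝ => x + t • v) v 0 := by
    simpa using ((hasDerivAt_id (0 : ℝ)).smul_const v).const_add x
  have hsq_ne : ‖x + (0 : ℝ) • v‖ ^ 2 ≠ 0 := by simpa using hx
  -- `‖·‖ = √(‖·‖²)`, and the square is differentiable everywhere
  have hsqrt := hline.norm_sq.sqrt hsq_ne
  simp only [Real.sqrt_sq (norm_nonneg _), zero_smul, add_zero] at hsqrt
  convert hsqrt using 1
  rw [real_inner_smul_right, real_inner_comm]
  field_simp [norm_ne_zero_iff.2 hx]

theorem tendsto_norm_add_smul_sub_norm_div (x v : E) [Decidable (x = 0)] :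
    Tendsto (fun t : ℝ => (‖x + t • v‖ - ‖x‖) / t) (𝓝[>] 0)
      (𝓝 (if x = 0 then ‖v‖ else inner ℝ v (‖x‖⁻¹ • x))) := by
  split_ifs with hx
  · subst hx
    refine tendsto_const_nhds.congr' ?_
    filter_upwards [self_mem_nhdsWithin] with t (ht : 0 < t)
    rw [zero_add, norm_zero, sub_zero, norm_smul, Real.norm_of_nonneg ht.le,
      mul_div_cancel_left₀ _ ht.ne']
  · have hslope := hasDerivAt_iff_tendsto_slope.1 (hasDerivAt_norm_add_smul hx v)
    refine (hslope.mono_left (nhdsWithin_mono _ fun t (ht : 0 < t) => ht.ne')).congr fun t => ?_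
    simp [slope_def_field]

end NormDirectionalDerivative

theorem weissfeld_directional_derivative (m : ℕ) (F : Fin m → EuclideanSpace ℝ (Fin 2))
    (i₀ : Fin m) (k : ℕ) (hk : k = (Finset.univ.filter (fun j => F j = F i₀)).card)
    (N : EuclideanSpace ℝ (Fin 2))
    (hN : N = - ∑ j ∈ Finset.univ.filter (fun j => F j ≠ F i₀),
        (‖F j - F i₀‖⁻¹ : ℝ) • (F j - F i₀))
    (v : EuclideanSpace ℝ (Fin 2)) :
    Tendsto (fun t : ℝ =>
        ((∑ j, ‖(F i₀ + t • v) - F j‖) - ∑ j, ‖F i₀ - F j‖) / t)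
      (𝓝[>] 0) (𝓝 ((k : ℝ) * ‖v‖ + inner ℝ v N)) := by
  have hsummand (j : Fin m) := tendsto_norm_add_smul_sub_norm_div (F i₀ - F j) v
  have hsum := tendsto_finsetSum Finset.univ fun j _ => hsummand j
  have hN' : N = ∑ j ∈ Finset.univ.filter (fun j => ¬F j = F i₀),
      (‖F i₀ - F j‖⁻¹ : ℝ) • (F i₀ - F j) := by
    rw [hN, ← Finset.sum_neg_distrib]
    exact Finset.sum_congr rfl fun j _ => by rw [← smul_neg, neg_sub, norm_sub_rev]
  have hlimit : ∑ j, (if F i₀ - F j = 0 then ‖v‖ else inner ℝ v (‖F i₀ - F j‖⁻¹ • (F i₀ - F j)))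
      = (k : ℝ) * ‖v‖ + inner ℝ v N := by
    simp only [sub_eq_zero, eq_comm (a := F i₀)]
    rw [Finset.sum_ite, Finset.sum_const, hk, nsmul_eq_mul, hN', inner_sum]
  rw [← hlimit]
  refine hsum.congr fun t => ?_
  rw [← Finset.sum_div, Finset.sum_sub_distrib]
  simp only [add_sub_right_comm]
end

section
/- Let H be the symmetry group (of order 2p) of a regular p-gon P centered at O in ℝ², and let F₁, ..., F_m be points in ℝ² with the set G = {f(F_i) : f ∈ H, 1 ≤ i ≤ m} not all equal to O. If F₀(X) = Σ_{f ∈ H} Σ_{F_i ≠ O} ‖X - f(F_i)‖, then Σ_{f ∈ H} Σ_{F_i ≠ O} (f(F_i) - O)/‖f(F_i) - O‖ = 0, i.e., the center O satisfies the Weissfeld stationarity condition, hence O minimizes F₀. -/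
open scoped Classical Real

/-- The rotation part of the dihedral symmetry group of the regular `p`-gon centered at `0`,
    modeled in the plane `ℂ`: rotation by angle `2πk/p`. -/
noncomputable def dihedralRot (p k : ℕ) (z : ℂ) : ℂ :=
  Complex.exp (2 * π * Complex.I * k / p) * z

/-- The reflection elements of the dihedral symmetry group of the regular `p`-gon
    centered at `0`: rotation by `2πk/p` composed with conjugation. -/
noncomputable def dihedralRefl (p k : ℕ) (z : ℂ) : ℂ :=
  Complex.exp (2 * π * Complex.I * k / p) * (starRingEnd ℂ z)

/-
Every rotation `z ↦ ζᵏ z` and every reflection `z ↦ ζᵏ z̄` (with `ζ = exp (2πi/p)`) is an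
isometry fixing `0`, and for `p ≥ 2` the `p`-th roots of unity sum to zero, so each of the two
halves of the orbit of a point already sums to zero; in particular so do the unit vectors towards
the orbit points, which is Weiszfeld's stationarity condition at `0`. Stationarity gives the
minimum because `‖X - a‖ ≥ ‖a‖ - ⟪X, a / ‖a‖⟫` (Cauchy–Schwarz), and summing these supporting
hyperplanes the linear terms cancel.
-/

open Finset
open scoped InnerProductSpace

section Weiszfeld

variable {E : Type*} [NormedAddCommGroup E] [InnerProductSpace ℝ E]

theorem norm_sub_inner_smul_le_norm_sub {a : E} (ha : a ≠ 0) (X : E) :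
    ‖a‖ - ⟪X, ‖a‖⁻¹ • a⟫_ℝ ≤ ‖X - a‖ := by
  have hna : 0 < ‖a‖ := norm_pos_iff.mpr ha
  calc ‖a‖ - ⟪X, ‖a‖⁻¹ • a⟫_ℝ = ‖a‖⁻¹ * ⟪a - X, a⟫_ℝ := by
        rw [real_inner_smul_right, inner_sub_left, real_inner_self_eq_norm_sq]
        field_simp
    _ ≤ ‖a‖⁻¹ * (‖a - X‖ * ‖a‖) := by gcongr; exact real_inner_le_norm _ _
    _ = ‖X - a‖ := by rw [norm_sub_rev]; field_simp

theorem isMinOn_sum_norm_sub_of_sum_smul_eq_zero {ι : Type*} (s : Finset ι) (a : ι → E)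
    (ha : ∀ j ∈ s, a j ≠ 0) (hstat : ∑ j ∈ s, ‖a j‖⁻¹ • a j = 0) :
    IsMinOn (fun X => ∑ j ∈ s, ‖X - a j‖) Set.univ 0 := by
  rw [isMinOn_iff]
  intro X _
  calc ∑ j ∈ s, ‖0 - a j‖ = ∑ j ∈ s, (‖a j‖ - ⟪X, ‖a j‖⁻¹ • a j⟫_ℝ) := by
        rw [sum_sub_distrib, ← inner_sum, hstat, inner_zero_right, sub_zero]
        simp only [zero_sub, norm_neg]
    _ ≤ ∑ j ∈ s, ‖X - a j‖ :=
        sum_le_sum fun j hj => norm_sub_inner_smul_le_norm_sub (ha j hj) X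

end Weiszfeld

section Dihedral

theorem norm_exp_two_pi_I_mul_div (p k : ℕ) :
    ‖Complex.exp (2 * π * Complex.I * k / p)‖ = 1 := by
  rw [Complex.norm_exp]
  norm_num [Complex.div_re, Complex.mul_re, Complex.mul_im]

theorem sum_exp_two_pi_I_mul_div_eq_zero {p : ℕ} (hp : 2 ≤ p) :
    ∑ k ∈ range p, Complex.exp (2 * π * Complex.I * k / p) = 0 := by
  rw [← (Complex.isPrimitiveRoot_exp p (by omega)).geom_sum_eq_zero (by omega)]
  refine sum_congr rfl fun k _ => ?_
  rw [← Complex.exp_nat_mul]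
  ring_nf

theorem norm_dihedralRot (p k : ℕ) (z : ℂ) : ‖dihedralRot p k z‖ = ‖z‖ := by
  rw [dihedralRot, norm_mul, norm_exp_two_pi_I_mul_div, one_mul]

theorem norm_dihedralRefl (p k : ℕ) (z : ℂ) : ‖dihedralRefl p k z‖ = ‖z‖ := by
  rw [dihedralRefl, norm_mul, norm_exp_two_pi_I_mul_div, one_mul, RCLike.norm_conj]

theorem dihedralRot_ne_zero (p k : ℕ) {z : ℂ} (hz : z ≠ 0) : dihedralRot p k z ≠ 0 :=
  norm_ne_zero_iff.mp (by rwa [norm_dihedralRot, norm_ne_zero_iff])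

theorem dihedralRefl_ne_zero (p k : ℕ) {z : ℂ} (hz : z ≠ 0) : dihedralRefl p k z ≠ 0 :=
  norm_ne_zero_iff.mp (by rwa [norm_dihedralRefl, norm_ne_zero_iff])

theorem sum_dihedralRot_eq_zero {p : ℕ} (hp : 2 ≤ p) (z : ℂ) :
    ∑ k ∈ range p, dihedralRot p k z = 0 := by
  simp only [dihedralRot, ← sum_mul, sum_exp_two_pi_I_mul_div_eq_zero hp, zero_mul]

theorem sum_dihedralRefl_eq_zero {p : ℕ} (hp : 2 ≤ p) (z : ℂ) :
    ∑ k ∈ range p, dihedralRefl p k z = 0 := by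
  simp only [dihedralRefl, ← sum_mul, sum_exp_two_pi_I_mul_div_eq_zero hp, zero_mul]

theorem sum_dihedral_orbit_unit_eq_zero {p : ℕ} (hp : 2 ≤ p) {ι : Type*} (s : Finset ι)
    (F : ι → ℂ) :
    ∑ k ∈ range p, ∑ i ∈ s,
        ((‖dihedralRot p k (F i)‖⁻¹ : ℝ) • dihedralRot p k (F i) +
         (‖dihedralRefl p k (F i)‖⁻¹ : ℝ) • dihedralRefl p k (F i)) = 0 := by
  simp only [norm_dihedralRot, norm_dihedralRefl]
  rw [sum_comm]
  refine sum_eq_zero fun i _ => ?_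
  rw [sum_add_distrib, ← smul_sum, ← smul_sum, sum_dihedralRot_eq_zero hp,
    sum_dihedralRefl_eq_zero hp, smul_zero, add_zero]

end Dihedral

theorem dihedral_symmetrized_center_minimizes_general (p m : ℕ) (hp : 3 ≤ p)
    (F : Fin m → ℂ) :
    (∑ k ∈ Finset.range p, ∑ i ∈ Finset.univ.filter (fun i => F i ≠ 0),
        ((‖dihedralRot p k (F i)‖⁻¹ : ℝ) • (dihedralRot p k (F i) - 0) +
         (‖dihedralRefl p k (F i)‖⁻¹ : ℝ) • (dihedralRefl p k (F i) - 0))) = 0 ∧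
    IsMinOn (fun X : ℂ => ∑ k ∈ Finset.range p, ∑ i ∈ Finset.univ.filter (fun i => F i ≠ 0),
        (‖X - dihedralRot p k (F i)‖ + ‖X - dihedralRefl p k (F i)‖)) Set.univ 0 := by
  have hstat := sum_dihedral_orbit_unit_eq_zero (by omega : 2 ≤ p) (univ.filter (F · ≠ 0)) F
  simp only [sub_zero]
  refine ⟨hstat, ?_⟩
  let orbit : (ℕ × Fin m) × Bool → ℂ := fun j =>
    bif j.2 then dihedralRefl p j.1.1 (F j.1.2) else dihedralRot p j.1.1 (F j.1.2)
  have horbit : ∀ j ∈ (range p ×ˢ univ.filter (F · ≠ 0)) ×ˢ univ, orbit j ≠ 0 := by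
    rintro ⟨⟨k, i⟩, _ | _⟩ hj <;> simp only [mem_product, mem_filter] at hj
    · exact dihedralRot_ne_zero p k hj.1.2.2
    · exact dihedralRefl_ne_zero p k hj.1.2.2
  have key := isMinOn_sum_norm_sub_of_sum_smul_eq_zero _ orbit horbit
    (by simpa [orbit, sum_product, add_comm] using hstat)
  simpa [orbit, sum_product, add_comm] using key

theorem dihedral_symmetrized_center_minimizes (p m : ℕ) (hp : 3 ≤ p)
    (F : Fin m → ℂ) (hG : ∃ i, F i ≠ 0) :
    (∑ k ∈ Finset.range p, ∑ i ∈ Finset.univ.filter (fun i => F i ≠ 0),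
        ((‖dihedralRot p k (F i)‖⁻¹ : ℝ) • (dihedralRot p k (F i) - 0) +
         (‖dihedralRefl p k (F i)‖⁻¹ : ℝ) • (dihedralRefl p k (F i) - 0))) = 0 ∧
    IsMinOn (fun X : ℂ => ∑ k ∈ Finset.range p, ∑ i ∈ Finset.univ.filter (fun i => F i ≠ 0),
        (‖X - dihedralRot p k (F i)‖ + ‖X - dihedralRefl p k (F i)‖)) Set.univ 0 :=
  dihedral_symmetrized_center_minimizes_general p m hp F
end

section
/- Let O be the origin in ℝ², let F be a point with ‖F‖ > 1, and let Q be a point with ‖Q‖ < 1. Then ‖ (F - Q)/‖F - Q‖ - F/‖F‖ ‖ ≤ 4/(1 + ‖F‖). -/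
/-! Writing `x = F - Q` and `y = F`, so that `x - y = -Q`, the difference of the normalisations
splits as `‖y‖⁻¹ • (x - y) + (‖x‖⁻¹ - ‖y‖⁻¹) • x`; by the reverse triangle inequality each part
has norm at most `‖x - y‖ / ‖y‖ < 1 / ‖F‖`, and `2 / ‖F‖ ≤ 4 / (1 + ‖F‖)` because `1 ≤ ‖F‖`. -/

section NormedSpace

variable {E : Type*} [NormedAddCommGroup E] [NormedSpace ℝ E]

theorem norm_inv_norm_sub_inv_norm_smul_le (x y : E) (hy : y ≠ 0) :
    ‖(‖x‖⁻¹ - ‖y‖⁻¹) • x‖ ≤ ‖x - y‖ / ‖y‖ := by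
  have hy' : 0 < ‖y‖ := norm_pos_iff.mpr hy
  rw [norm_smul, Real.norm_eq_abs]
  rcases (norm_nonneg x).eq_or_lt with hx | hx
  · rw [← hx, mul_zero]
    positivity
  have hscale : |‖x‖⁻¹ - ‖y‖⁻¹| * ‖x‖ = |‖y‖ - ‖x‖| / ‖y‖ :=
    calc |‖x‖⁻¹ - ‖y‖⁻¹| * ‖x‖ = |(‖x‖⁻¹ - ‖y‖⁻¹) * ‖x‖| := by rw [abs_mul, abs_of_pos hx]
      _ = |(‖y‖ - ‖x‖) / ‖y‖| := by congr 1; field_simp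
      _ = |‖y‖ - ‖x‖| / ‖y‖ := by rw [abs_div, abs_of_pos hy']
  rw [hscale]
  gcongr
  exact (abs_norm_sub_norm_le y x).trans_eq (norm_sub_rev y x)

theorem norm_inv_norm_smul_sub_inv_norm_smul_le (x y : E) (hy : y ≠ 0) :
    ‖‖x‖⁻¹ • x - ‖y‖⁻¹ • y‖ ≤ 2 * ‖x - y‖ / ‖y‖ := by
  have hsplit : ‖x‖⁻¹ • x - ‖y‖⁻¹ • y = ‖y‖⁻¹ • (x - y) + (‖x‖⁻¹ - ‖y‖⁻¹) • x := by
    module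
  have hfirst : ‖‖y‖⁻¹ • (x - y)‖ = ‖x - y‖ / ‖y‖ := by
    rw [norm_smul, norm_inv, norm_norm, inv_mul_eq_div]
  calc ‖‖x‖⁻¹ • x - ‖y‖⁻¹ • y‖
      ≤ ‖‖y‖⁻¹ • (x - y)‖ + ‖(‖x‖⁻¹ - ‖y‖⁻¹) • x‖ := hsplit ▸ norm_add_le _ _
    _ ≤ ‖x - y‖ / ‖y‖ + ‖x - y‖ / ‖y‖ :=
        add_le_add hfirst.le (norm_inv_norm_sub_inv_norm_smul_le x y hy)
    _ = 2 * ‖x - y‖ / ‖y‖ := by ring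

end NormedSpace

theorem unit_vector_difference_bound (F Q : EuclideanSpace ℝ (Fin 2))
    (hF : 1 < ‖F‖) (hQ : ‖Q‖ < 1) :
    ‖(‖F - Q‖⁻¹ : ℝ) • (F - Q) - (‖F‖⁻¹ : ℝ) • F‖ ≤ 4 / (1 + ‖F‖) := by
  have hF₀ : 0 < ‖F‖ := one_pos.trans hF
  calc ‖(‖F - Q‖⁻¹ : ℝ) • (F - Q) - (‖F‖⁻¹ : ℝ) • F‖
      ≤ 2 * ‖F - Q - F‖ / ‖F‖ :=
        norm_inv_norm_smul_sub_inv_norm_smul_le _ _ (norm_pos_iff.mp hF₀)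
    _ = 2 * ‖Q‖ / ‖F‖ := by rw [sub_sub_cancel_left, norm_neg]
    _ ≤ 2 * 1 / ‖F‖ := by gcongr
    _ ≤ 4 / (1 + ‖F‖) := by
        rw [div_le_div_iff₀ hF₀ (by positivity)]
        linarith
end
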